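/- arXiv:2011.02522 — 4 statements merged into one kernel-verified Lean document; each statement's English description precedes it below -/
import Mathlib

section
/- For every nonnegative integer j, the square of the central binomial coefficient satisfies C(2j, j)^2 < 4^(2j+1) / (π(4j+1)). -/
/-!
Wallis' partial products `W j = 16 ^ j / (C(2j,j) ^ 2 * (2j+1))` increase to `π / 2`, and the
inequality says exactly that `W j * (4j+2)/(4j+1) > π / 2`. This corrected sequence still tends to
`π / 2` but is strictly decreasing: the ratio of consecutive terms is
`(2j+2)^2 (4j+1) / ((2j+1)^2 (4j+5))`, whose denominator exceeds the numerator by `1`.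
-/

open Filter Topology Real
open scoped Nat

namespace Real.Wallis

theorem W_eq_div_choose_sq (n : ℕ) :
    W n = 16 ^ n / (((2 * n).choose n : ℝ) ^ 2 * (2 * n + 1)) := by
  have hfact : ((2 * n)! : ℝ) = (2 * n).choose n * n ! * n ! := by
    have h := Nat.choose_mul_factorial_mul_factorial (show n ≤ 2 * n by omega)
    rw [show 2 * n - n = n by omega] at h
    exact_mod_cast h.symm
  have hpow : (2 : ℝ) ^ (4 * n) = 16 ^ n := by rw [pow_mul]; norm_num
  have hchoose : ((2 * n).choose n : ℝ) ≠ 0 := by exact_mod_cast (Nat.choose_pos (by omega)).ne'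
  rw [W_eq_factorial_ratio, hfact, hpow]
  field_simp

theorem strictAnti_W_mul : StrictAnti fun j : ℕ => W j * ((4 * j + 2) / (4 * j + 1)) := by
  refine strictAnti_nat_of_succ_lt fun j => ?_
  rw [W_succ, mul_assoc]
  refine mul_lt_mul_of_pos_left ?_ (W_pos j)
  push_cast
  rw [div_mul_div_comm, div_mul_div_comm, div_lt_div_iff₀ (by positivity) (by positivity)]
  nlinarith [j.cast_nonneg (α := ℝ)]

theorem tendsto_W_mul :
    Tendsto (fun j : ℕ => W j * ((4 * j + 2) / (4 * j + 1))) atTop (𝓝 (π / 2)) := by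
  have hinv : Tendsto (fun j : ℕ => ((4 * j + 1 : ℝ))⁻¹) atTop (𝓝 0) :=
    tendsto_inv_atTop_zero.comp <| tendsto_atTop_add_const_right _ _ <|
      tendsto_natCast_atTop_atTop.const_mul_atTop (by norm_num)
  have hlim := tendsto_W_nhds_pi_div_two.mul (tendsto_const_nhds (x := (1 : ℝ)).add hinv)
  rw [add_zero, mul_one] at hlim
  refine hlim.congr fun j => ?_
  congr 1
  field_simp
  ring

theorem pi_div_two_lt_W_mul (j : ℕ) : π / 2 < W j * ((4 * j + 2) / (4 * j + 1)) :=
  (strictAnti_W_mul.antitone.le_of_tendsto tendsto_W_mul (j + 1)).trans_lt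
    (strictAnti_W_mul (lt_add_one j))

end Real.Wallis

theorem central_binom_sq_lt (j : ℕ) :
    ((Nat.choose (2 * j) j : ℝ)) ^ 2 < 4 ^ (2 * j + 1) / (Real.pi * (4 * j + 1)) := by
  have h := Real.Wallis.pi_div_two_lt_W_mul j
  have hchoose : (0 : ℝ) < (2 * j).choose j := by exact_mod_cast Nat.choose_pos (by omega)
  rw [Real.Wallis.W_eq_div_choose_sq, div_mul_div_comm, lt_div_iff₀ (by positivity)] at h
  have hpow : (4 : ℝ) ^ (2 * j + 1) = 16 ^ j * 4 := by rw [pow_succ, pow_mul]; norm_num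
  rw [lt_div_iff₀ (by positivity), hpow]
  nlinarith
end

section
/- For every nonnegative integer j, j! ≤ (j+1)^(j+1/2) · e^(−j+1). -/
/-!
Stirling's sequence `n! / (√(2n) (n/e)^n)` is decreasing, so it is bounded by its value `e / √2`
at `n = 1`; this is the bound `n! ≤ n^(n+1/2) e^(1-n)` for `n ≥ 1`. Applied to `(j+1)! = (j+1) j!`
it gives `j! ≤ (j+1)^(j+1/2) e^(-j)`, which is stronger than the claim by a factor `e`.
-/

open Real Nat

theorem Stirling.stirlingSeq_le_stirlingSeq_one {n : ℕ} (hn : n ≠ 0) :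
    Stirling.stirlingSeq n ≤ exp 1 / √2 := by
  obtain ⟨m, rfl⟩ := Nat.exists_eq_succ_of_ne_zero hn
  simpa [Stirling.stirlingSeq_one] using Stirling.stirlingSeq'_antitone (Nat.zero_le m)

theorem factorial_le_rpow_mul_exp {n : ℕ} (hn : n ≠ 0) :
    (n ! : ℝ) ≤ (n : ℝ) ^ ((n : ℝ) + 1 / 2) * exp (1 - n) := by
  have hn' : (0 : ℝ) < n := by positivity
  have h := Stirling.stirlingSeq_le_stirlingSeq_one hn
  rw [Stirling.stirlingSeq, div_le_div_iff₀ (by positivity) (by positivity)] at h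
  have hrhs : (n : ℝ) ^ ((n : ℝ) + 1 / 2) * exp (1 - n) * √2
      = exp 1 * (√(2 * n) * (n / exp 1) ^ n) := by
    rw [rpow_add hn', rpow_natCast, sqrt_eq_rpow, sqrt_eq_rpow, mul_rpow (by norm_num) hn'.le,
      exp_sub, div_pow, ← exp_one_pow]
    field_simp
  exact le_of_mul_le_mul_right (h.trans hrhs.ge) (by positivity)

theorem factorial_le_stirling_bound (j : ℕ) :
    (Nat.factorial j : ℝ) ≤ ((j : ℝ) + 1) ^ ((j : ℝ) + 1 / 2) * Real.exp (-(j : ℝ) + 1) := by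
  have hj : (0 : ℝ) < j + 1 := by positivity
  have h := factorial_le_rpow_mul_exp j.succ_ne_zero
  push_cast at h
  calc (j ! : ℝ) = ((j + 1) ! : ℝ) / (j + 1) := by
        rw [Nat.factorial_succ]; push_cast; field_simp
    _ ≤ ((j : ℝ) + 1) ^ ((j : ℝ) + 1 + 1 / 2) * exp (1 - (j + 1)) / (j + 1) := by gcongr
    _ = ((j : ℝ) + 1) ^ ((j : ℝ) + 1 / 2) * exp (-(j : ℝ)) := by
        rw [add_right_comm, rpow_add_one hj.ne']; field_simp; ring_nf
    _ ≤ ((j : ℝ) + 1) ^ ((j : ℝ) + 1 / 2) * exp (-(j : ℝ) + 1) := by gcongr; linarith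
end

section
/- Let B be a symmetric positive definite real n×n matrix. Then the minimum eigenvalue of B satisfies λ_min(B) ≥ det(B) · ((n−1)/tr(B))^(n−1). -/
/-!
Write `μ` for the eigenvalues of `B`, so that `det B = ∏ μ` and `tr B = ∑ μ`. Fix the index `j` of
the smallest eigenvalue. AM-GM on the other `n - 1` eigenvalues bounds their product by
`(∑_{i ≠ j} μ i / (n - 1)) ^ (n - 1) ≤ (tr B / (n - 1)) ^ (n - 1)`, hence
`det B ≤ μ j * (tr B / (n - 1)) ^ (n - 1)`.
-/

open Finset

namespace Real

theorem prod_le_sum_div_card_pow {ι : Type*} (s : Finset ι) {z : ι → ℝ}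
    (hz : ∀ i ∈ s, 0 ≤ z i) : ∏ i ∈ s, z i ≤ ((∑ i ∈ s, z i) / #s) ^ #s := by
  rcases s.eq_empty_or_nonempty with rfl | hs
  · simp
  have hcard : (0 : ℝ) < #s := by exact_mod_cast hs.card_pos
  have amgm := geom_mean_le_arith_mean s (fun _ ↦ 1) z (fun _ _ ↦ zero_le_one)
    (by simpa using hcard) hz
  simp only [rpow_one, one_mul, sum_const, nsmul_eq_mul, mul_one] at amgm
  calc ∏ i ∈ s, z i
      = ((∏ i ∈ s, z i) ^ (#s : ℝ)⁻¹) ^ #s := by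
        rw [← rpow_natCast, ← rpow_mul (prod_nonneg hz), inv_mul_cancel₀ hcard.ne', rpow_one]
    _ ≤ ((∑ i ∈ s, z i) / #s) ^ #s := by gcongr; exact rpow_nonneg (prod_nonneg hz) _

variable {ι : Type*} [Fintype ι] [DecidableEq ι]

theorem prod_le_mul_sum_div_pow {μ : ι → ℝ} (hμ : ∀ i, 0 ≤ μ i) (j : ι) :
    ∏ i, μ i ≤ μ j * ((∑ i, μ i) / (Fintype.card ι - 1)) ^ (Fintype.card ι - 1) := by
  have hcard : #(univ.erase j) = Fintype.card ι - 1 := by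
    rw [card_erase_of_mem (mem_univ j), card_univ]
  have hcard_cast : ((#(univ.erase j) : ℕ) : ℝ) = Fintype.card ι - 1 := by
    rw [hcard, Nat.cast_pred (Fintype.card_pos_iff.2 ⟨j⟩)]
  rw [← mul_prod_erase univ μ (mem_univ j), ← hcard, ← hcard_cast]
  gcongr
  · exact hμ j
  · calc ∏ i ∈ univ.erase j, μ i
        ≤ ((∑ i ∈ univ.erase j, μ i) / #(univ.erase j)) ^ #(univ.erase j) :=
          prod_le_sum_div_card_pow _ fun i _ ↦ hμ i
      _ ≤ ((∑ i, μ i) / #(univ.erase j)) ^ #(univ.erase j) := by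
          gcongr
          · exact div_nonneg (sum_nonneg fun i _ ↦ hμ i) (Nat.cast_nonneg _)
          · exact fun i _ _ ↦ hμ i
          · exact erase_subset j univ

theorem prod_mul_card_sub_one_div_sum_pow_le {μ : ι → ℝ} (hμ : ∀ i, 0 < μ i) (j : ι) :
    (∏ i, μ i) * ((Fintype.card ι - 1) / ∑ i, μ i) ^ (Fintype.card ι - 1) ≤ μ j := by
  obtain ⟨k, hk⟩ : ∃ k, Fintype.card ι = k + 1 :=
    Nat.exists_eq_add_one_of_ne_zero (Fintype.card_pos_iff.2 ⟨j⟩).ne'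
  have hsum : 0 < ∑ i, μ i := sum_pos (fun i _ ↦ hμ i) ⟨j, mem_univ j⟩
  have hprod := prod_le_mul_sum_div_pow (fun i ↦ (hμ i).le) j
  rw [hk, Nat.add_sub_cancel, Nat.cast_add_one, add_sub_cancel_right] at hprod ⊢
  have hcancel : ((∑ i, μ i) / k * (k / ∑ i, μ i)) ^ k = 1 := by
    rcases k.eq_zero_or_pos with rfl | hk
    · exact pow_zero _
    · rw [div_mul_div_cancel₀ (by positivity), div_self hsum.ne', one_pow]
  calc (∏ i, μ i) * (k / ∑ i, μ i) ^ k
      ≤ μ j * ((∑ i, μ i) / k) ^ k * (k / ∑ i, μ i) ^ k := by gcongr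
    _ = μ j := by rw [mul_assoc, ← mul_pow, hcancel, mul_one]

end Real

theorem Matrix.PosDef.det_mul_card_sub_one_div_trace_pow_le_eigenvalues {ι : Type*} [Fintype ι]
    [DecidableEq ι] {B : Matrix ι ι ℝ} (hB : B.PosDef) (j : ι) :
    B.det * ((Fintype.card ι - 1) / B.trace) ^ (Fintype.card ι - 1) ≤ hB.1.eigenvalues j := by
  have hdet : B.det = ∏ i, hB.1.eigenvalues i := by simpa using hB.1.det_eq_prod_eigenvalues
  have htrace : B.trace = ∑ i, hB.1.eigenvalues i := by simpa using hB.1.trace_eq_sum_eigenvalues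
  rw [hdet, htrace]
  exact Real.prod_mul_card_sub_one_div_sum_pow_le hB.eigenvalues_pos j

theorem min_eigenvalue_lower_bound (n : ℕ) (hn : 2 ≤ n)
    (B : Matrix (Fin n) (Fin n) ℝ) (hB : B.IsHermitian) (hPD : B.PosDef) :
    B.det * (((n : ℝ) - 1) / B.trace) ^ (n - 1) ≤ ⨅ i, hB.eigenvalues i := by
  have : Nonempty (Fin n) := ⟨⟨0, by omega⟩⟩
  obtain ⟨j, hj⟩ : ∃ j, hB.eigenvalues j = ⨅ i, hB.eigenvalues i := exists_eq_ciInf_of_finite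
  rw [← hj]
  simpa using hPD.det_mul_card_sub_one_div_trace_pow_le_eigenvalues j
end

section
/- Let C = ((2l+1)!)^d · (l!)^2 and let B be the matrix with entries B_{r,s} = ∫_{[−1,1]^d} u^(r+s)/(r! s!) du over multi-indices |r|,|s| ≤ l. Then all entries of C·B are nonnegative integers, and hence det(B) ≥ 1/C^D where D = C(l+d,d). -/
open MeasureTheory Matrix

lemma mm_int1 (a : ℕ) : ∫ t in Set.Icc (-1:ℝ) 1, t ^ a
    = if Even a then 2 / (a + 1 : ℝ) else 0 := by
  rw [MeasureTheory.integral_Icc_eq_integral_Ioc,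
    ← intervalIntegral.integral_of_le (by norm_num : (-1:ℝ) ≤ 1),
    integral_pow]
  rcases Nat.even_or_odd a with h | h
  · rw [if_pos h, Odd.neg_one_pow (h.add_one)]
    push_cast; ring
  · rw [if_neg (Nat.not_even_iff_odd.mpr h), Even.neg_one_pow (h.add_one)]
    ring

lemma mm_cube (d : ℕ) (a : Fin d → ℕ) :
    ∫ u in (Set.univ.pi fun _ : Fin d => Set.Icc (-1 : ℝ) 1), ∏ i, u i ^ a i
      = ∏ i, ∫ t in Set.Icc (-1:ℝ) 1, t ^ a i := by
  rw [← MeasureTheory.integral_indicator (MeasurableSet.univ_pi fun _ => measurableSet_Icc)]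
  have : (Set.univ.pi fun _ : Fin d => Set.Icc (-1 : ℝ) 1).indicator
      (fun u : Fin d → ℝ => ∏ i, u i ^ a i)
      = fun u => ∏ i, (Set.Icc (-1:ℝ) 1).indicator (fun t => t ^ a i) (u i) := by
    funext u
    by_cases hu : u ∈ Set.univ.pi fun _ : Fin d => Set.Icc (-1 : ℝ) 1
    · rw [Set.indicator_of_mem hu]
      exact (Finset.prod_congr rfl fun i _ =>
        (Set.indicator_of_mem (hu i trivial) _).symm)
    · rw [Set.indicator_of_notMem hu]
      rw [Set.mem_pi] at hu; push_neg at hu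
      obtain ⟨i, -, hi⟩ := hu
      exact (Finset.prod_eq_zero (Finset.mem_univ i)
        (by rw [Set.indicator_of_notMem hi])).symm
  rw [this, MeasureTheory.integral_fintype_prod_volume_eq_prod (f := fun i t =>
    (Set.Icc (-1:ℝ) 1).indicator (fun t => t ^ a i) t)]
  exact Finset.prod_congr rfl fun i _ =>
    MeasureTheory.integral_indicator measurableSet_Icc

def mmCube (d : ℕ) : Set (Fin d → ℝ) := Set.univ.pi fun _ : Fin d => Set.Icc (-1 : ℝ) 1

noncomputable def mmG {d l : ℕ} (r : {s : Fin d → Fin (l + 1) // ∑ i, (s i : ℕ) ≤ l})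
    (u : Fin d → ℝ) : ℝ :=
  (∏ i, u i ^ (r.1 i : ℕ)) / ∏ i, ((r.1 i : ℕ).factorial : ℝ)

lemma mmG_cont {d l : ℕ} (r : {s : Fin d → Fin (l + 1) // ∑ i, (s i : ℕ) ≤ l}) :
    Continuous (mmG r) := by
  unfold mmG
  exact (continuous_finset_prod _ fun i _ => (continuous_apply i).pow _).div_const _

lemma mmCube_compact (d : ℕ) : IsCompact (mmCube d) :=
  isCompact_univ_pi fun _ => isCompact_Icc

lemma mm_entry_gram {d l : ℕ} (r s : {s : Fin d → Fin (l + 1) // ∑ i, (s i : ℕ) ≤ l}) :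
    (∫ u in mmCube d,
        (∏ i, u i ^ ((r.1 i : ℕ) + (s.1 i : ℕ))) /
          (((∏ i, Nat.factorial (r.1 i)) * (∏ i, Nat.factorial (s.1 i)) : ℕ) : ℝ))
      = ∫ u in mmCube d, mmG r u * mmG s u := by
  apply integral_congr_ae (Filter.Eventually.of_forall fun u => ?_)
  unfold mmG
  push_cast
  rw [show (∏ i, u i ^ ((r.1 i : ℕ) + (s.1 i : ℕ)))
      = ∏ i, (u i ^ (r.1 i : ℕ) * u i ^ (s.1 i : ℕ))
    from Finset.prod_congr rfl fun i _ => pow_add _ _ _,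
    div_mul_div_comm, ← Finset.prod_mul_distrib]
  rw [Finset.prod_mul_distrib, Finset.prod_mul_distrib]

lemma mm_qf {d l : ℕ} (x : {s : Fin d → Fin (l + 1) // ∑ i, (s i : ℕ) ≤ l} → ℝ) :
    dotProduct x ((Matrix.of fun r s => ∫ u in mmCube d, mmG r u * mmG s u) *ᵥ x)
      = ∫ u in mmCube d, (∑ r, x r * mmG r u) ^ 2 := by
  have hint : ∀ r s : {s : Fin d → Fin (l + 1) // ∑ i, (s i : ℕ) ≤ l},
      IntegrableOn (fun u => (x r * mmG r u) * (x s * mmG s u)) (mmCube d) := fun r s =>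
    (((continuous_const.mul (mmG_cont r)).mul
      (continuous_const.mul (mmG_cont s))).continuousOn).integrableOn_compact (mmCube_compact d)
  simp only [dotProduct, Matrix.mulVec, Matrix.of_apply]
  have step1 : ∀ r, x r * (∑ s, (∫ u in mmCube d, mmG r u * mmG s u) * x s)
      = ∫ u in mmCube d, ∑ s, (x r * mmG r u) * (x s * mmG s u) := by
    intro r
    rw [integral_finset_sum _ fun s _ => hint r s, Finset.mul_sum]
    congr 1; funext s
    rw [← integral_mul_const, ← integral_const_mul]
    exact integral_congr_ae (Filter.Eventually.of_forall fun u => by ring)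
  simp_rw [step1]
  rw [← integral_finset_sum _ fun r _ => (integrable_finset_sum _ fun s _ => hint r s)]
  congr 1; funext u
  rw [← Finset.sum_mul_sum, sq]


def mmOpen (d : ℕ) : Set (Fin d → ℝ) := Set.univ.pi fun _ : Fin d => Set.Ioo (-1 : ℝ) 1

-- vanishing on the open cube from zero integral
lemma mm_vanish {d : ℕ} {f : (Fin d → ℝ) → ℝ} (hf : Continuous f)
    (h0 : ∫ u in mmCube d, f u ^ 2 = 0) : ∀ u ∈ mmOpen d, f u = 0 := by
  have hcp : IsCompact (mmCube d) := isCompact_univ_pi fun _ => isCompact_Icc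
  have hint : IntegrableOn (fun u => f u ^ 2) (mmCube d) :=
    ((hf.pow 2).continuousOn).integrableOn_compact hcp
  have hsupp : (volume.restrict (mmCube d)) (Function.support fun u => f u ^ 2) = 0 := by
    by_contra h
    have : 0 < ∫ u in mmCube d, f u ^ 2 :=
      (integral_pos_iff_support_of_nonneg_ae
        (Filter.Eventually.of_forall fun u => sq_nonneg (f u)) hint).mpr
        (pos_iff_ne_zero.mpr h)
    exact this.ne' h0
  intro u hu
  by_contra hne
  have hV : IsOpen (mmOpen d ∩ f ⁻¹' ({0}ᶜ)) :=
    (isOpen_set_pi Set.finite_univ fun _ _ => isOpen_Ioo).inter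
      (isOpen_compl_singleton.preimage hf)
  have hVpos : 0 < volume (mmOpen d ∩ f ⁻¹' ({0}ᶜ)) :=
    hV.measure_pos volume ⟨u, hu, hne⟩
  have hVsub : (mmOpen d ∩ f ⁻¹' ({0}ᶜ)) ⊆
      (Function.support fun u => f u ^ 2) ∩ mmCube d := by
    rintro v ⟨hv1, hv2⟩
    refine ⟨by simpa [Function.mem_support] using pow_ne_zero 2 hv2, fun i _ => ?_⟩
    exact Set.Ioo_subset_Icc_self (hv1 i trivial)
  have : volume (mmOpen d ∩ f ⁻¹' ({0}ᶜ)) ≤ volume ((Function.support fun u => f u ^ 2) ∩ mmCube d) := measure_mono hVsub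
  rw [← Measure.restrict_apply' hcp.measurableSet] at this
  exact absurd (this.trans_eq hsupp) hVpos.not_ge


lemma mm_poly_zero {d : ℕ} {P : MvPolynomial (Fin d) ℝ}
    (h : ∀ u ∈ mmOpen d, MvPolynomial.eval u P = 0) : P = 0 := by
  apply MvPolynomial.funext
  intro y
  rw [map_zero]
  set M : ℝ := 1 + ∑ i, |y i| with hM
  have hMpos : 0 < M := by positivity
  set q : Polynomial ℝ :=
    MvPolynomial.eval₂ (Polynomial.C : ℝ →+* Polynomial ℝ)
      (fun i => Polynomial.C (y i) * Polynomial.X) P with hqdef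
  have hq : ∀ t : ℝ, q.eval t = MvPolynomial.eval (fun i => y i * t) P := by
    intro t
    have := MvPolynomial.eval₂_comp_left (Polynomial.evalRingHom t)
      (Polynomial.C : ℝ →+* Polynomial ℝ) (fun i => Polynomial.C (y i) * Polynomial.X) P
    have h1 : (Polynomial.evalRingHom t).comp (Polynomial.C : ℝ →+* Polynomial ℝ)
        = RingHom.id ℝ := RingHom.ext fun a => by simp
    have h2 : (Polynomial.evalRingHom t) ∘ (fun i : Fin d => Polynomial.C (y i) * Polynomial.X)
        = fun i => y i * t := funext fun i => by simp
    rw [h1, h2, MvPolynomial.eval₂_id] at this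
    simpa [hqdef] using this
  have hmem : ∀ t ∈ Set.Ioo (-(1/M)) (1/M), (fun i => y i * t) ∈ mmOpen d := by
    intro t ht i _
    have habs : |t| < 1 / M := abs_lt.mpr ⟨ht.1, ht.2⟩
    have hyi : |y i| ≤ M := by
      have : |y i| ≤ ∑ j, |y j| :=
        Finset.single_le_sum (fun j _ => abs_nonneg (y j)) (Finset.mem_univ i)
      linarith
    have : |y i * t| < 1 := by
      rw [abs_mul]
      calc |y i| * |t| ≤ M * |t| := mul_le_mul_of_nonneg_right hyi (abs_nonneg t)
        _ < M * (1 / M) := by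
            rcases eq_or_lt_of_le (abs_nonneg t) with h0 | h0
            · rw [← h0, mul_zero]; positivity
            · exact mul_lt_mul_of_pos_left habs hMpos
        _ = 1 := mul_one_div_cancel hMpos.ne'
    exact Set.mem_Ioo.mpr (abs_lt.mp this)
  have hq0 : q = 0 := by
    refine Polynomial.eq_zero_of_infinite_isRoot q
      (Set.Infinite.mono ?_ (Set.Ioo_infinite (neg_lt_self (by positivity : (0:ℝ) < 1/M))))
    intro t ht
    exact (hq t).trans (h _ (hmem t ht))
  have := hq 1
  rw [hq0] at this
  simp only [Polynomial.eval_zero] at this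
  rw [show (fun i => y i * 1) = y from funext fun i => mul_one (y i)] at this
  exact this.symm

lemma mm_fact_dvd {d l : ℕ} {r : Fin d → ℕ} (h : ∑ i, r i ≤ l) :
    (∏ i, (r i).factorial) ∣ l.factorial :=
  (Nat.prod_factorial_dvd_factorial_sum _ _).trans (Nat.factorial_dvd_factorial h)

lemma mm_entry_cast {d l : ℕ} (r s : Fin d → ℕ) (hr : ∑ i, r i ≤ l) (hs : ∑ i, s i ≤ l)
    (hb : ∀ i, r i + s i + 1 ≤ 2 * l + 1) :
    ((Nat.factorial (2 * l + 1) ^ d * Nat.factorial l ^ 2 : ℕ) : ℝ) *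
      ((∏ i, (if Even (r i + s i) then 2 / ((r i : ℝ) + (s i : ℝ) + 1) else 0)) /
        (((∏ i, Nat.factorial (r i)) * (∏ i, Nat.factorial (s i)) : ℕ) : ℝ))
    = ((Nat.factorial l / ∏ i, (r i).factorial) * (Nat.factorial l / ∏ i, (s i).factorial) *
        ∏ i, (if Even (r i + s i) then 2 * ((2 * l + 1).factorial / (r i + s i + 1)) else 0) : ℕ) := by
  have hrp : 0 < ∏ i, (r i).factorial := Finset.prod_pos fun i _ => Nat.factorial_pos _
  have hsp : 0 < ∏ i, (s i).factorial := Finset.prod_pos fun i _ => Nat.factorial_pos _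
  have hrne : ((∏ i, (r i).factorial : ℕ) : ℝ) ≠ 0 := by exact_mod_cast hrp.ne'
  have hsne : ((∏ i, (s i).factorial : ℕ) : ℝ) ≠ 0 := by exact_mod_cast hsp.ne'
  have key : ∀ i : Fin d,
      ((if Even (r i + s i) then 2 * ((2*l+1).factorial / (r i + s i + 1)) else 0 : ℕ) : ℝ)
      = ((2*l+1).factorial : ℝ) * (if Even (r i + s i) then 2 / ((r i : ℝ) + (s i : ℝ) + 1) else 0) := by
    intro i
    by_cases h : Even (r i + s i)
    · rw [if_pos h, if_pos h, Nat.cast_mul,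
        Nat.cast_div (Nat.dvd_factorial (Nat.succ_pos _) (hb i))
          (by exact_mod_cast (Nat.succ_pos (r i + s i)).ne')]
      have : ((r i + s i + 1 : ℕ) : ℝ) = (r i : ℝ) + (s i : ℝ) + 1 := by push_cast; ring
      rw [this]; ring
    · simp [h]
  rw [show (((l.factorial / ∏ i, (r i).factorial) * (l.factorial / ∏ i, (s i).factorial) *
        ∏ i, (if Even (r i + s i) then 2 * ((2 * l + 1).factorial / (r i + s i + 1)) else 0) : ℕ) : ℝ)
      = ((l.factorial / ∏ i, (r i).factorial : ℕ) : ℝ) * ((l.factorial / ∏ i, (s i).factorial : ℕ) : ℝ) *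
        ∏ i, ((if Even (r i + s i) then 2 * ((2 * l + 1).factorial / (r i + s i + 1)) else 0 : ℕ) : ℝ)
      from by push_cast; ring,
    Nat.cast_div (mm_fact_dvd hr) hrne, Nat.cast_div (mm_fact_dvd hs) hsne]
  simp_rw [key]
  rw [Finset.prod_mul_distrib, Finset.prod_const, Finset.card_univ, Fintype.card_fin,
    Nat.cast_mul, Nat.cast_pow, Nat.cast_pow]
  field_simp
  push_cast
  ring
lemma mm_indep {d l : ℕ} (x : {s : Fin d → Fin (l + 1) // ∑ i, (s i : ℕ) ≤ l} → ℝ)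
    (h : ∀ u ∈ mmOpen d, ∑ r, x r * mmG r u = 0) : x = 0 := by
  set F : {s : Fin d → Fin (l + 1) // ∑ i, (s i : ℕ) ≤ l} → (Fin d →₀ ℕ) :=
    fun r => Finsupp.equivFunOnFinite.symm (fun i => (r.1 i : ℕ)) with hF
  have hFinj : Function.Injective F := by
    intro r s hrs
    have := congrArg Finsupp.equivFunOnFinite hrs
    simp only [Equiv.apply_symm_apply, hF] at this
    refine Subtype.ext (funext fun i => Fin.ext ?_)
    exact congrFun this i
  set c : {s : Fin d → Fin (l + 1) // ∑ i, (s i : ℕ) ≤ l} → ℝ :=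
    fun r => ∏ i, ((r.1 i : ℕ).factorial : ℝ) with hc
  have hcne : ∀ r, c r ≠ 0 := fun r =>
    Finset.prod_ne_zero_iff.mpr fun i _ => Nat.cast_ne_zero.mpr (Nat.factorial_pos _).ne'
  set P : MvPolynomial (Fin d) ℝ :=
    ∑ r, MvPolynomial.monomial (F r) (x r / c r) with hP
  have heval : ∀ u, MvPolynomial.eval u P = ∑ r, x r * mmG r u := by
    intro u
    rw [hP, map_sum]
    refine Finset.sum_congr rfl fun r _ => ?_
    rw [MvPolynomial.eval_monomial, Finsupp.prod_pow]
    have : ∀ i, (F r) i = (r.1 i : ℕ) := fun i => by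
      simp [hF, Finsupp.equivFunOnFinite]
      rfl
    simp_rw [this]
    rw [mmG]
    field_simp
    rw [mul_div_assoc, show (∏ i, ((r.1 i : ℕ).factorial : ℝ)) / c r = 1 from div_self (hcne r),
      mul_one]
  have hP0 : P = 0 := mm_poly_zero fun u hu => by rw [heval]; exact h u hu
  funext r0
  have := congrArg (MvPolynomial.coeff (F r0)) hP0
  rw [hP, MvPolynomial.coeff_sum] at this
  simp_rw [MvPolynomial.coeff_monomial] at this
  simp_rw [hFinj.eq_iff] at this
  rw [Finset.sum_ite_eq' Finset.univ r0] at this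
  simp only [Finset.mem_univ, if_true, MvPolynomial.coeff_zero] at this
  have := (div_eq_zero_iff.mp this).resolve_right (hcne r0)
  simpa using this

lemma mm_posdef (d l : ℕ) :
    (Matrix.of fun r s : {s : Fin d → Fin (l + 1) // ∑ i, (s i : ℕ) ≤ l} =>
      ∫ u in mmCube d, mmG r u * mmG s u).PosDef := by
  rw [Matrix.posDef_iff_dotProduct_mulVec]
  constructor
  · refine Matrix.ext fun r s => ?_
    simp only [Matrix.conjTranspose_apply, Matrix.of_apply, star_trivial]
    exact integral_congr_ae (Filter.Eventually.of_forall fun u => mul_comm _ _)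
  · intro x hx
    have hsx : star x = x := funext fun r => star_trivial _
    rw [hsx, mm_qf]
    have hfc : Continuous fun u => ∑ r, x r * mmG r u :=
      continuous_finset_sum _ fun r _ => continuous_const.mul (mmG_cont r)
    have hnn : 0 ≤ ∫ u in mmCube d, (∑ r, x r * mmG r u) ^ 2 :=
      integral_nonneg fun u => sq_nonneg _
    rcases hnn.lt_or_eq with h | h
    · exact h
    · exact absurd (mm_indep x (mm_vanish hfc h.symm)) hx
lemma mm_card_le (d l : ℕ) :
    Fintype.card {s : Fin d → Fin (l + 1) // ∑ i, (s i : ℕ) ≤ l} ≤ (l + d).choose d := by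
  classical
  have hsum_le : ∀ (r : {s : Fin d → Fin (l + 1) // ∑ i, (s i : ℕ) ≤ l}) (i : Fin d),
      ∑ j ∈ Finset.Iic i, (r.1 j : ℕ) ≤ l := fun r i =>
    le_trans (Finset.sum_le_sum_of_subset (Finset.subset_univ _)) r.2
  set f : {s : Fin d → Fin (l + 1) // ∑ i, (s i : ℕ) ≤ l} → Fin d → Fin (l + d) :=
    fun r i => ⟨(∑ j ∈ Finset.Iic i, (r.1 j : ℕ)) + i.val,
      by have h1 := hsum_le r i; have h2 := i.isLt; omega⟩ with hf
  have hmono : ∀ r, StrictMono (f r) := by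
    intro r i i' hii
    simp only [hf, Fin.mk_lt_mk]
    have h1 : ∑ j ∈ Finset.Iic i, (r.1 j : ℕ) ≤ ∑ j ∈ Finset.Iic i', (r.1 j : ℕ) :=
      Finset.sum_le_sum_of_subset (Finset.Iic_subset_Iic.mpr hii.le)
    have h2 : i.val < i'.val := hii
    omega
  have hfinj : ∀ r r', f r = f r' → r = r' := by
    intro r r' hrr
    have hsum : ∀ i, ∑ j ∈ Finset.Iic i, (r.1 j : ℕ) = ∑ j ∈ Finset.Iic i, (r'.1 j : ℕ) := by
      intro i
      have := congrFun hrr i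
      simp only [hf, Fin.mk.injEq] at this
      omega
    have key : ∀ n : ℕ, ∀ i : Fin d, i.val = n → (r.1 i : ℕ) = (r'.1 i : ℕ) := by
      intro n
      induction n using Nat.strong_induction_on with
      | _ n ih =>
        intro i hi
        have h1 : ∑ j ∈ Finset.Iio i, (r.1 j : ℕ) = ∑ j ∈ Finset.Iio i, (r'.1 j : ℕ) :=
          Finset.sum_congr rfl fun j hj =>
            ih j.val (hi ▸ (Finset.mem_Iio.mp hj : j < i)) j rfl
        have h2 := hsum i
        rw [← Finset.Iio_insert i, Finset.sum_insert (by simp),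
          Finset.sum_insert (by simp)] at h2
        omega
    exact Subtype.ext (funext fun i => Fin.ext (key i.val i rfl))
  set φ : {s : Fin d → Fin (l + 1) // ∑ i, (s i : ℕ) ≤ l} →
      {t : Finset (Fin (l + d)) // t.card = d} :=
    fun r => ⟨Finset.univ.image (f r), by
      rw [Finset.card_image_of_injective _ (hmono r).injective, Finset.card_univ,
        Fintype.card_fin]⟩ with hφ
  have hφinj : Function.Injective φ := by
    intro r r' h
    apply hfinj
    have himg : Finset.univ.image (f r) = Finset.univ.image (f r') := congrArg Subtype.val h
    have hcard : (Finset.univ.image (f r)).card = d := by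
      rw [Finset.card_image_of_injective _ (hmono r).injective, Finset.card_univ,
        Fintype.card_fin]
    have e1 := Finset.orderEmbOfFin_unique hcard
      (f := f r) (fun x => Finset.mem_image_of_mem _ (Finset.mem_univ x)) (hmono r)
    have e2 := Finset.orderEmbOfFin_unique hcard
      (f := f r') (fun x => himg ▸ Finset.mem_image_of_mem _ (Finset.mem_univ x)) (hmono r')
    rw [e1, e2]
  calc Fintype.card {s : Fin d → Fin (l + 1) // ∑ i, (s i : ℕ) ≤ l}
      ≤ Fintype.card {t : Finset (Fin (l + d)) // t.card = d} :=
        Fintype.card_le_of_injective φ hφinj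
    _ = (l + d).choose d := by rw [Fintype.card_finset_len, Fintype.card_fin]
lemma mm_entry_nat {d l : ℕ} (r s : {s : Fin d → Fin (l + 1) // ∑ i, (s i : ℕ) ≤ l}) :
    ((Nat.factorial (2 * l + 1) ^ d * Nat.factorial l ^ 2 : ℕ) : ℝ) *
      (∫ u in (Set.univ.pi fun _ : Fin d => Set.Icc (-1 : ℝ) 1),
        (∏ i, u i ^ ((r.1 i : ℕ) + (s.1 i : ℕ))) /
          (((∏ i, Nat.factorial (r.1 i)) * (∏ i, Nat.factorial (s.1 i)) : ℕ) : ℝ))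
    = ((Nat.factorial l / ∏ i, Nat.factorial (r.1 i)) *
        (Nat.factorial l / ∏ i, Nat.factorial (s.1 i)) *
        ∏ i, (if Even ((r.1 i : ℕ) + (s.1 i : ℕ)) then
          2 * ((2 * l + 1).factorial / ((r.1 i : ℕ) + (s.1 i : ℕ) + 1)) else 0) : ℕ) := by
  rw [MeasureTheory.integral_div, mm_cube d (fun i => (r.1 i : ℕ) + (s.1 i : ℕ))]
  simp_rw [mm_int1, Nat.cast_add]
  exact mm_entry_cast _ _ r.2 s.2 fun i => by
    have h1 := Fin.is_le (r.1 i); have h2 := Fin.is_le (s.1 i); omega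

open MeasureTheory in
theorem moment_matrix_integer_entries_det_bound (d l : ℕ) :
    (∀ r s : {s : Fin d → Fin (l + 1) // ∑ i, (s i : ℕ) ≤ l},
      ∃ k : ℕ,
        ((Nat.factorial (2 * l + 1) ^ d * Nat.factorial l ^ 2 : ℕ) : ℝ) *
          (∫ u in (Set.univ.pi fun _ : Fin d => Set.Icc (-1 : ℝ) 1),
            (∏ i, u i ^ ((r.1 i : ℕ) + (s.1 i : ℕ))) /
              (((∏ i, Nat.factorial (r.1 i)) * (∏ i, Nat.factorial (s.1 i)) : ℕ) : ℝ)) = k) ∧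
    1 / ((Nat.factorial (2 * l + 1) ^ d * Nat.factorial l ^ 2 : ℕ) : ℝ) ^ (Nat.choose (l + d) d)
      ≤ Matrix.det (Matrix.of
          (fun r s : {s : Fin d → Fin (l + 1) // ∑ i, (s i : ℕ) ≤ l} =>
            ∫ u in (Set.univ.pi fun _ : Fin d => Set.Icc (-1 : ℝ) 1),
              (∏ i, u i ^ ((r.1 i : ℕ) + (s.1 i : ℕ))) /
                (((∏ i, Nat.factorial (r.1 i)) * (∏ i, Nat.factorial (s.1 i)) : ℕ) : ℝ))) := by
  classical
  set ι := {s : Fin d → Fin (l + 1) // ∑ i, (s i : ℕ) ≤ l}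
  set C : ℕ := Nat.factorial (2 * l + 1) ^ d * Nat.factorial l ^ 2 with hC
  set B : Matrix ι ι ℝ := Matrix.of
    (fun r s : ι =>
      ∫ u in (Set.univ.pi fun _ : Fin d => Set.Icc (-1 : ℝ) 1),
        (∏ i, u i ^ ((r.1 i : ℕ) + (s.1 i : ℕ))) /
          (((∏ i, Nat.factorial (r.1 i)) * (∏ i, Nat.factorial (s.1 i)) : ℕ) : ℝ)) with hB
  set K : ι → ι → ℕ := fun r s =>
    (Nat.factorial l / ∏ i, Nat.factorial (r.1 i)) *
      (Nat.factorial l / ∏ i, Nat.factorial (s.1 i)) *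
      ∏ i, (if Even ((r.1 i : ℕ) + (s.1 i : ℕ)) then
        2 * ((2 * l + 1).factorial / ((r.1 i : ℕ) + (s.1 i : ℕ) + 1)) else 0) with hK
  have hent : ∀ r s : ι, (C : ℝ) * B r s = (K r s : ℝ) := fun r s => mm_entry_nat r s
  constructor
  · exact fun r s => ⟨K r s, hent r s⟩
  · -- positivity of det B
    have hBgram : B = Matrix.of (fun r s : ι => ∫ u in mmCube d, mmG r u * mmG s u) :=
      Matrix.ext fun r s => mm_entry_gram r s
    have hdetB : 0 < B.det := by rw [hBgram]; exact (mm_posdef d l).det_pos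
    have hCpos : 0 < C := by positivity
    have hC1 : (1 : ℝ) ≤ (C : ℝ) := by exact_mod_cast hCpos
    set n := Fintype.card ι with hn
    have hCn : (0 : ℝ) < (C : ℝ) ^ n := by positivity
    -- integer determinant
    set N : Matrix ι ι ℤ := fun r s => (K r s : ℤ) with hN
    have hmap : (C : ℝ) • B = N.map (Int.cast : ℤ → ℝ) := by
      refine Matrix.ext fun r s => ?_
      simp only [Matrix.smul_apply, Matrix.map_apply, smul_eq_mul, hN]
      rw [hent r s]; exact (Int.cast_natCast (K r s)).symm
    have hdet1 : ((N.det : ℤ) : ℝ) = (C : ℝ) ^ n * B.det := by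
      rw [show ((N.det : ℤ) : ℝ) = (N.map (Int.cast : ℤ → ℝ)).det from
        (Int.castRingHom ℝ).map_det N, ← hmap, Matrix.det_smul]
    have hNpos : (1 : ℤ) ≤ N.det := by
      have : (0 : ℝ) < ((N.det : ℤ) : ℝ) := by rw [hdet1]; positivity
      exact_mod_cast this
    have hone : (1 : ℝ) ≤ (C : ℝ) ^ n * B.det := by
      calc (1 : ℝ) ≤ ((N.det : ℤ) : ℝ) := by exact_mod_cast hNpos
        _ = _ := hdet1
    have h2 : 1 / (C : ℝ) ^ n ≤ B.det := by
      rw [div_le_iff₀ hCn]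
      linarith
    refine le_trans ?_ h2
    apply one_div_le_one_div_of_le hCn
    exact pow_le_pow_right₀ hC1 (mm_card_le d l)
end
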